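/- Let φ : W → V be linear and let ggl(φ)₀ = {(F,f) ∈ End(W) × End(V) : φ∘F = f∘φ}. Define an action L of ggl(φ)₀ on Hom(V,W) by L_{(F,f)}A := F∘A − A∘f. Then L is a Lie algebra action by derivations of the bracket [A₁,A₂]_φ = A₁∘φ∘A₂ − A₂∘φ∘A₁, i.e., L_{(F,f)}[A₁,A₂]_φ = [L_{(F,f)}A₁, A₂]_φ + [A₁, L_{(F,f)}A₂]_φ. -/

import Mathlib

open LinearMap

variable {K W V : Type} [Field K] [AddCommGroup W] [AddCommGroup V]
  [Module K W] [Module K V]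

/-- The bracket `[A₁,A₂]_φ = A₁∘φ∘A₂ − A₂∘φ∘A₁` on `Hom(V,W)`. -/
def bracketPhi (φ : W →ₗ[K] V) (A₁ A₂ : V →ₗ[K] W) : V →ₗ[K] W :=
  A₁ ∘ₗ φ ∘ₗ A₂ - A₂ ∘ₗ φ ∘ₗ A₁

/-- The action `L_{(F,f)} A = F∘A − A∘f` of `ggl(φ)₀` on `Hom(V,W)`. -/
def gglAct (F : Module.End K W) (f : Module.End K V) (A : V →ₗ[K] W) : V →ₗ[K] W :=
  F ∘ₗ A - A ∘ₗ f

theorem gglAct_commutator (F F' : Module.End K W) (f f' : Module.End K V) (A : V →ₗ[K] W) :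
    gglAct (F * F' - F' * F) (f * f' - f' * f) A =
      gglAct F f (gglAct F' f' A) - gglAct F' f' (gglAct F f A) := by
  ext v
  simp only [gglAct, LinearMap.sub_apply, comp_apply, Module.End.mul_apply, map_sub]
  abel

/-- The cross terms `A₁ ∘ f ∘ φ ∘ A₂` and `A₁ ∘ φ ∘ F ∘ A₂` of the right-hand side cancel
exactly because `(F, f)` intertwines `φ`. -/
theorem gglAct_bracketPhi {φ : W →ₗ[K] V} {F : Module.End K W} {f : Module.End K V}
    (h : φ ∘ₗ F = f ∘ₗ φ) (A₁ A₂ : V →ₗ[K] W) :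
    gglAct F f (bracketPhi φ A₁ A₂) =
      bracketPhi φ (gglAct F f A₁) A₂ + bracketPhi φ A₁ (gglAct F f A₂) := by
  have hφ (x : W) : φ (F x) = f (φ x) := DFunLike.congr_fun h x
  ext v
  simp only [gglAct, bracketPhi, LinearMap.add_apply, LinearMap.sub_apply, comp_apply,
    map_sub, hφ]
  abel

/-- `L` is a Lie algebra action by derivations of `[·,·]_φ`. -/
theorem gglAct_lie_action_by_derivations (φ : W →ₗ[K] V) :
    (∀ (F F' : Module.End K W) (f f' : Module.End K V),
      φ ∘ₗ F = f ∘ₗ φ → φ ∘ₗ F' = f' ∘ₗ φ →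
      ∀ A : V →ₗ[K] W,
        gglAct (F * F' - F' * F) (f * f' - f' * f) A =
          gglAct F f (gglAct F' f' A) - gglAct F' f' (gglAct F f A)) ∧
    (∀ (F : Module.End K W) (f : Module.End K V), φ ∘ₗ F = f ∘ₗ φ →
      ∀ A₁ A₂ : V →ₗ[K] W,
        gglAct F f (bracketPhi φ A₁ A₂) =
          bracketPhi φ (gglAct F f A₁) A₂ + bracketPhi φ A₁ (gglAct F f A₂)) :=
  ⟨fun F F' f f' _ _ A => gglAct_commutator F F' f f' A,
    fun _ _ h A₁ A₂ => gglAct_bracketPhi h A₁ A₂⟩
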